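/- arXiv:cs/0106001 — 2 statements merged into one kernel-verified Lean document; each statement's English description precedes it below -/
import Mathlib

section
/- For every integer k ≥ 3 there exist positive real constants A_k and B_k such that for all natural numbers n ≥ k and all m ≤ n: |ω_{n,m,k}/C(n,k) − (1 − 2m/n)^k| ≤ (A_k/n)·|1 − 2m/n|^{k−2} + B_k/n². -/
/-!
For `2m ≤ n` put `x = n - 2m`; the case `2m > n` reduces to it through the symmetry
`ω_{n,n-m,k} = (-1)^k ω_{n,m,k}`. The factorisation `(1-X)^m (1+X)^(n-m) = (1-X²)^m (1+X)^x` gives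
`ω_{n,m,k} = ∑_i (-1)^i C(m,i) C(x,k-2i)`. Measured against `C(n,k) ≥ n^k / (2^k k!)` (valid for
`n ≥ 2k`), the term `i = 0`, `C(x,k)/C(n,k) = ∏_{j<k} (x-j)/(n-j)`, is within `O(1/n) (x/n)^(k-2)`
of `(x/n)^k`, the term `i = 1` is `O(1/n) (x/n)^(k-2)`, and the remaining terms together are
`O(1/n²)`. For `n < 2k` the left-hand side is at most `2`, which is `O(1/n²)` as well.
-/

open Finset Filter

attribute [local instance] Classical.propDecidable

/-- `ω_{n,m,k} = ∑_{s=0}^{k} (−1)^s C(m,s) C(n−m,k−s)`. -/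
def omegaW (n m k : ℕ) : ℤ :=
  ∑ s ∈ Finset.range (k + 1), (-1 : ℤ) ^ s * (m.choose s : ℤ) * ((n - m).choose (k - s) : ℤ)

open Polynomial Nat

theorem coeff_one_sub_X_pow {R : Type*} [CommRing R] (m s : ℕ) :
    ((1 - X : R[X]) ^ m).coeff s = (-1) ^ s * m.choose s := by
  have h : (1 - X : R[X]) ^ m = ((1 + X) ^ m).comp (C (-1) * X) := by simp [sub_eq_add_neg]
  rw [h, comp_C_mul_X_coeff, coeff_one_add_X_pow, mul_comm]

theorem omegaW_eq_coeff (n m k : ℕ) :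
    omegaW n m k = ((1 - X : ℤ[X]) ^ m * (1 + X) ^ (n - m)).coeff k := by
  simp only [omegaW, coeff_mul, Finset.Nat.sum_antidiagonal_eq_sum_range_succ_mk,
    coeff_one_sub_X_pow, coeff_one_add_X_pow]

theorem omegaW_symm {n m : ℕ} (k : ℕ) (h : m ≤ n) :
    omegaW n (n - m) k = (-1) ^ k * omegaW n m k := by
  have hcomp : ((1 - X : ℤ[X]) ^ m * (1 + X) ^ (n - m)).comp (C (-1) * X) =
      (1 - X) ^ (n - m) * (1 + X) ^ m := by
    simp only [mul_comp, pow_comp, sub_comp, add_comp, one_comp, X_comp, map_neg, map_one]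
    ring
  rw [omegaW_eq_coeff, omegaW_eq_coeff, Nat.sub_sub_self h, ← hcomp, comp_C_mul_X_coeff, mul_comm]

theorem coeff_one_sub_X_sq_pow_mul_one_add_X_pow (a x k : ℕ) :
    ((1 - X ^ 2 : ℤ[X]) ^ a * (1 + X) ^ x).coeff k =
      ∑ i ∈ range (k / 2 + 1), (-1 : ℤ) ^ i * a.choose i * x.choose (k - 2 * i) := by
  have hexp : (1 - X ^ 2 : ℤ[X]) ^ a =
      ∑ i ∈ range (a + 1), C ((-1 : ℤ) ^ i * a.choose i) * X ^ (2 * i) := by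
    rw [sub_eq_add_neg, add_comm, add_pow]
    refine sum_congr rfl fun i _ => ?_
    rw [neg_pow, one_pow, mul_one, pow_mul, map_mul, map_pow, map_neg, map_one, map_natCast]
    ring
  set F : ℕ → ℤ := fun i =>
    (-1) ^ i * a.choose i * if 2 * i ≤ k then (x.choose (k - 2 * i) : ℤ) else 0
  calc ((1 - X ^ 2 : ℤ[X]) ^ a * (1 + X) ^ x).coeff k = ∑ i ∈ range (a + 1), F i := by
        simp only [hexp, sum_mul, finsetSum_coeff, mul_assoc, coeff_C_mul, coeff_X_pow_mul',
          coeff_one_add_X_pow, F]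
    _ = ∑ i ∈ range (a + k + 1), F i :=
        (eventually_constant_sum (fun i hi => by simp [F, choose_eq_zero_of_lt (by omega : a < i)])
          (by omega)).symm
    _ = ∑ i ∈ range (k / 2 + 1), F i :=
        eventually_constant_sum (fun i hi => by simp [F, show ¬ 2 * i ≤ k by omega]) (by omega)
    _ = _ := sum_congr rfl fun i hi => by simp [F, show 2 * i ≤ k by simp at hi; omega]

theorem omegaW_eq_sum {n m : ℕ} (k : ℕ) (h : 2 * m ≤ n) :
    omegaW n m k =
      ∑ i ∈ range (k / 2 + 1), (-1 : ℤ) ^ i * m.choose i * (n - 2 * m).choose (k - 2 * i) := by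
  obtain ⟨x, rfl⟩ := Nat.exists_eq_add_of_le h
  rw [omegaW_eq_coeff, Nat.add_sub_cancel_left, ← coeff_one_sub_X_sq_pow_mul_one_add_X_pow,
    show 2 * m + x - m = m + x by omega, pow_add, ← mul_assoc, ← mul_pow]
  ring_nf

theorem abs_omegaW_le_choose {n m : ℕ} (k : ℕ) (h : m ≤ n) : |omegaW n m k| ≤ n.choose k := by
  have hvdm :
      (n.choose k : ℤ) = ∑ s ∈ range (k + 1), (m.choose s : ℤ) * (n - m).choose (k - s) := by
    rw [← Nat.add_sub_of_le h, Nat.add_choose_eq, Finset.Nat.sum_antidiagonal_eq_sum_range_succ_mk]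
    push_cast
    rw [Nat.add_sub_cancel_left]
  rw [hvdm]
  refine (abs_sum_le_sum_abs _ _).trans (sum_le_sum fun s _ => ?_)
  simp [abs_mul]

theorem abs_omegaW_sub_choose_sub_mul_choose_le {n m : ℕ} (k : ℕ) (h : 2 * m ≤ n) :
    |omegaW n m (k + 2) - ((n - 2 * m).choose (k + 2) - m * (n - 2 * m).choose k)| ≤
      k * n ^ k := by
  have hterm : ∀ i < k / 2,
      |(-1 : ℤ) ^ (i + 2) * m.choose (i + 2) * (n - 2 * m).choose (k + 2 - 2 * (i + 2))| ≤
        n ^ k := by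
    intro i hi
    rcases Nat.eq_zero_or_pos n with rfl | hn
    · simp [show m = 0 by omega]
    have hle : m.choose (i + 2) * (n - 2 * m).choose (k + 2 - 2 * (i + 2)) ≤ n ^ k :=
      calc _ ≤ n ^ (i + 2) * n ^ (k + 2 - 2 * (i + 2)) :=
            Nat.mul_le_mul ((Nat.choose_le_pow _ _).trans (Nat.pow_le_pow_left (by omega) _))
              ((Nat.choose_le_pow _ _).trans (Nat.pow_le_pow_left (by omega) _))
        _ ≤ n ^ k := by rw [← pow_add]; exact Nat.pow_le_pow_right hn (by omega)
    rw [abs_mul, abs_mul, abs_pow, abs_neg, abs_one, one_pow, one_mul, Nat.abs_cast, Nat.abs_cast]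
    exact_mod_cast hle
  rw [omegaW_eq_sum _ h, Nat.add_div_right k two_pos, sum_range_succ', sum_range_succ']
  simp only [zero_add, mul_one, mul_zero, Nat.sub_zero, Nat.add_sub_cancel, choose_one_right,
    choose_zero_right, pow_zero, pow_one, Nat.cast_one, one_mul, neg_mul]
  rw [show ∀ S a c : ℤ, S + -c + a - (a - c) = S from fun _ _ _ => by ring]
  calc _ ≤ ∑ i ∈ range (k / 2), (n : ℤ) ^ k :=
        (abs_sum_le_sum_abs _ _).trans (sum_le_sum fun i hi => hterm i (mem_range.1 hi))
    _ ≤ k * n ^ k := by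
        rw [sum_const, card_range, nsmul_eq_mul]
        gcongr
        exact_mod_cast Nat.div_le_self k 2

theorem pow_le_two_pow_mul_factorial_mul_choose {n k : ℕ} (h : 2 * k ≤ n) :
    n ^ k ≤ 2 ^ k * (k ! * n.choose k) :=
  calc n ^ k ≤ (2 * (n + 1 - k)) ^ k := Nat.pow_le_pow_left (by omega) k
    _ = 2 ^ k * (n + 1 - k) ^ k := mul_pow ..
    _ ≤ 2 ^ k * (k ! * n.choose k) := by
      rw [← Nat.descFactorial_eq_factorial_mul_choose]
      exact Nat.mul_le_mul_left _ (Nat.pow_sub_le_descFactorial n k)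

theorem cast_choose_div_cast_choose {K : Type*} [Field K] [CharZero K] (x n k : ℕ) :
    (x.choose k : K) / n.choose k = ∏ j ∈ range k, ((x : K) - j) / (n - j) := by
  rw [cast_choose_eq_descPochhammer_div, cast_choose_eq_descPochhammer_div,
    descPochhammer_eval_eq_prod_range, descPochhammer_eval_eq_prod_range,
    div_div_div_cancel_right₀ (Nat.cast_ne_zero.2 (factorial_ne_zero k)), prod_div_distrib]

theorem abs_prod_sub_prod_le {ι α : Type*} [CommRing α] [LinearOrder α] [IsStrictOrderedRing α]
    (s : Finset ι) {a b : ι → α} {M : α} (ha : ∀ i ∈ s, |a i| ≤ M) (hb : ∀ i ∈ s, |b i| ≤ M) :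
    |∏ i ∈ s, a i - ∏ i ∈ s, b i| ≤ (∑ i ∈ s, |a i - b i|) * M ^ (#s - 1) := by
  induction s using Finset.induction_on with
  | empty => simp
  | insert i s hi ih =>
    simp only [mem_insert, forall_eq_or_imp] at ha hb
    have hM : 0 ≤ M := (abs_nonneg _).trans ha.1
    have hb' : |∏ j ∈ s, b j| ≤ M ^ #s := by
      rw [abs_prod]
      exact (prod_le_prod (fun _ _ => abs_nonneg _) hb.2).trans_eq (prod_const M)
    have hstep :
        M * ((∑ j ∈ s, |a j - b j|) * M ^ (#s - 1)) ≤ (∑ j ∈ s, |a j - b j|) * M ^ #s := by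
      rcases s.eq_empty_or_nonempty with rfl | hs
      · simp
      · rw [mul_left_comm, mul_pow_sub_one hs.card_pos.ne']
    rw [prod_insert hi, prod_insert hi, sum_insert hi, card_insert_of_notMem hi, Nat.add_sub_cancel,
      show a i * ∏ j ∈ s, a j - b i * ∏ j ∈ s, b j =
        a i * (∏ j ∈ s, a j - ∏ j ∈ s, b j) + (a i - b i) * ∏ j ∈ s, b j by ring]
    calc _ ≤ |a i| * |∏ j ∈ s, a j - ∏ j ∈ s, b j| + |a i - b i| * |∏ j ∈ s, b j| := by
          rw [← abs_mul, ← abs_mul]; exact abs_add_le _ _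
      _ ≤ M * ((∑ j ∈ s, |a j - b j|) * M ^ (#s - 1)) + |a i - b i| * M ^ #s := by
          gcongr
          · exact ha.1
          · exact ih ha.2 hb.2
      _ ≤ _ := by linarith

theorem abs_sub_div_sub_le {x j n : ℝ} (hj : 0 ≤ j) (hjx : j ≤ x) (hxn : x ≤ n) (hjn : 2 * j < n) :
    |(x - j) / (n - j)| ≤ x / n ∧ |(x - j) / (n - j) - x / n| ≤ 2 * j / n := by
  have hn : 0 < n := by linarith
  have hnj : 0 < n - j := by linarith
  have hdiff : x / n - (x - j) / (n - j) = j * (n - x) / (n * (n - j)) := by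
    field_simp; ring
  have hdiff0 : 0 ≤ j * (n - x) / (n * (n - j)) := by
    apply div_nonneg <;> nlinarith
  rw [abs_of_nonneg (div_nonneg (by linarith) hnj.le), abs_sub_comm, abs_of_nonneg (by linarith)]
  refine ⟨by linarith, ?_⟩
  have hnx : n - x ≤ 2 * (n - j) := by linarith
  rw [hdiff, div_le_div_iff₀ (by positivity) hn]
  nlinarith [mul_le_mul_of_nonneg_left hnx (mul_nonneg hj hn.le)]

theorem abs_choose_div_choose_sub_pow_le {x n : ℕ} (k : ℕ) (hn : 2 * (k + 2) ≤ n) (hx : x ≤ n) :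
    |(x.choose (k + 2) : ℝ) / n.choose (k + 2) - ((x : ℝ) / n) ^ (k + 2)| ≤
      2 * (k + 2) ^ 2 / n * ((x : ℝ) / n) ^ k := by
  have hn0 : (0 : ℝ) < n := by exact_mod_cast (by omega : 0 < n)
  have hnk : 2 * ((k : ℝ) + 2) ≤ n := by exact_mod_cast hn
  set T : ℝ := x / n
  have hT0 : 0 ≤ T := by positivity
  have hT1 : T ≤ 1 := div_le_one_of_le₀ (by exact_mod_cast hx) hn0.le
  rcases lt_or_ge x (k + 2) with hxk | hxk
  · have hTk : T ≤ (k + 2) / n := by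
      show (x : ℝ) / n ≤ _
      gcongr
      exact_mod_cast hxk.le
    rw [choose_eq_zero_of_lt hxk, Nat.cast_zero, zero_div, zero_sub, abs_neg,
      abs_of_nonneg (by positivity), pow_add, mul_comm]
    gcongr
    calc T ^ 2 ≤ T := by nlinarith
      _ ≤ (k + 2) / n := hTk
      _ ≤ 2 * (k + 2) ^ 2 / n := by gcongr; nlinarith
  · have hfactor : ∀ j ∈ range (k + 2),
        |((x : ℝ) - j) / (n - j)| ≤ T ∧ |((x : ℝ) - j) / (n - j) - T| ≤ 2 * (k + 2) / n := by
      intro j hj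
      have hjk : (j : ℝ) < k + 2 := by exact_mod_cast mem_range.1 hj
      obtain ⟨h₁, h₂⟩ := abs_sub_div_sub_le (x := x) (n := n) j.cast_nonneg
        (by exact_mod_cast (mem_range.1 hj).le.trans hxk) (by exact_mod_cast hx) (by linarith)
      exact ⟨h₁, h₂.trans (by gcongr)⟩
    have hprod := abs_prod_sub_prod_le (range (k + 2)) (b := fun _ => T) (M := T)
      (fun j hj => (hfactor j hj).1) (fun _ _ => (abs_of_nonneg hT0).le)
    rw [prod_const, card_range, show k + 2 - 1 = k + 1 by omega] at hprod
    rw [cast_choose_div_cast_choose]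
    refine hprod.trans ?_
    calc (∑ j ∈ range (k + 2), |((x : ℝ) - j) / (n - j) - T|) * T ^ (k + 1)
        ≤ (∑ _j ∈ range (k + 2), 2 * ((k : ℝ) + 2) / n) * T ^ k := by
          refine mul_le_mul (sum_le_sum fun j hj => (hfactor j hj).2)
            (pow_le_pow_of_le_one hT0 hT1 (by omega)) (by positivity) (by positivity)
      _ = 2 * (k + 2) ^ 2 / n * T ^ k := by
          rw [sum_const, card_range, nsmul_eq_mul]; push_cast; ring

theorem abs_omegaW_div_choose_sub_pow_le_of_two_mul_le {n m : ℕ} (k : ℕ)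
    (hn : 2 * (k + 2) ≤ n) (hm : 2 * m ≤ n) :
    |(omegaW n m (k + 2) : ℝ) / n.choose (k + 2) - (((n - 2 * m : ℕ) : ℝ) / n) ^ (k + 2)| ≤
      (2 * (k + 2) ^ 2 + 2 ^ (k + 2) * (k + 2)!) / n * (((n - 2 * m : ℕ) : ℝ) / n) ^ k +
        k * 2 ^ (k + 2) * (k + 2)! / n ^ 2 := by
  set x := n - 2 * m
  set C : ℝ := (n.choose (k + 2) : ℝ)
  set c : ℝ := 2 ^ (k + 2) * (k + 2)!
  have hn0 : (0 : ℝ) < n := by exact_mod_cast (by omega : 0 < n)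
  have hn0' : (n : ℝ) ≠ 0 := hn0.ne'
  have hC : (n : ℝ) ^ (k + 2) ≤ c * C := by
    simpa [c, C, mul_assoc] using
      (Nat.cast_le (α := ℝ)).2 (pow_le_two_pow_mul_factorial_mul_choose hn)
  have hC0 : 0 < C := Nat.cast_pos.2 (Nat.choose_pos (by omega))
  set E : ℝ := omegaW n m (k + 2) - (x.choose (k + 2) - m * x.choose k)
  have hE : |E| ≤ k * n ^ k := by
    have := (Int.cast_le (R := ℝ)).2 (abs_omegaW_sub_choose_sub_mul_choose_le k hm)
    push_cast at this
    exact this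
  have hmx : (m : ℝ) * x.choose k ≤ n * x ^ k := by
    exact_mod_cast Nat.mul_le_mul (by omega) (Nat.choose_le_pow x k)
  have hdecomp : (omegaW n m (k + 2) : ℝ) / C - ((x : ℝ) / n) ^ (k + 2) =
      ((x.choose (k + 2) : ℝ) / C - ((x : ℝ) / n) ^ (k + 2)) - m * x.choose k / C + E / C := by
    simp only [E]; ring
  have hterm1 : m * x.choose k / C ≤ c / n * ((x : ℝ) / n) ^ k := by
    rw [div_le_iff₀ hC0]
    calc (m : ℝ) * x.choose k ≤ ((x : ℝ) / n) ^ k / n * n ^ (k + 2) := by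
          refine hmx.trans_eq ?_
          rw [div_pow]
          field_simp
          ring
      _ ≤ ((x : ℝ) / n) ^ k / n * (c * C) := by gcongr
      _ = c / n * ((x : ℝ) / n) ^ k * C := by ring
  have hrest : |E / C| ≤ k * c / n ^ 2 := by
    rw [abs_div, abs_of_pos hC0, div_le_iff₀ hC0]
    calc |E| ≤ k / n ^ 2 * n ^ (k + 2) := by
          refine hE.trans_eq ?_
          field_simp
          ring
      _ ≤ k / n ^ 2 * (c * C) := by gcongr
      _ = k * c / n ^ 2 * C := by ring
  have hterm0 := abs_choose_div_choose_sub_pow_le k hn (by omega : x ≤ n)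
  rw [hdecomp]
  calc _ ≤ |(x.choose (k + 2) : ℝ) / C - ((x : ℝ) / n) ^ (k + 2)| + m * x.choose k / C
        + |E / C| := by
        refine (abs_add_le _ _).trans (add_le_add ((abs_sub _ _).trans ?_) le_rfl)
        rw [abs_of_nonneg (a := m * x.choose k / C) (by positivity)]
    _ ≤ _ := (add_le_add (add_le_add hterm0 hterm1) hrest).trans_eq (by ring)

theorem abs_omegaW_div_choose_sub_pow_le {n m : ℕ} (k : ℕ) (hn : 2 * (k + 2) ≤ n) (hm : m ≤ n) :
    |(omegaW n m (k + 2) : ℝ) / n.choose (k + 2) - (1 - 2 * (m : ℝ) / n) ^ (k + 2)| ≤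
      (2 * (k + 2) ^ 2 + 2 ^ (k + 2) * (k + 2)!) / n * |1 - 2 * (m : ℝ) / n| ^ k +
        k * 2 ^ (k + 2) * (k + 2)! / n ^ 2 := by
  have hn0 : (n : ℝ) ≠ 0 := by exact_mod_cast (by omega : n ≠ 0)
  wlog h2m : 2 * m ≤ n generalizing m with H
  · have hsymm := H (Nat.sub_le n m) (by omega)
    have hy : 1 - 2 * ((n - m : ℕ) : ℝ) / n = -(1 - 2 * (m : ℝ) / n) := by
      rw [Nat.cast_sub hm]; field_simp; ring
    rw [omegaW_symm _ hm, hy] at hsymm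
    push_cast at hsymm
    rwa [neg_pow (1 - 2 * (m : ℝ) / n), mul_div_assoc, ← mul_sub, abs_mul, abs_pow, abs_neg,
      abs_one, one_pow, one_mul, abs_neg] at hsymm
  have hy : 1 - 2 * (m : ℝ) / n = ((n - 2 * m : ℕ) : ℝ) / n := by
    rw [Nat.cast_sub h2m]; field_simp; push_cast; ring
  rw [hy, abs_of_nonneg (a := ((n - 2 * m : ℕ) : ℝ) / n) (by positivity)]
  exact abs_omegaW_div_choose_sub_pow_le_of_two_mul_le k hn h2m

theorem abs_omegaW_div_choose_sub_pow_le_two {n m : ℕ} (k : ℕ) (hm : m ≤ n) :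
    |(omegaW n m k : ℝ) / n.choose k - (1 - 2 * (m : ℝ) / n) ^ k| ≤ 2 := by
  have hω : |(omegaW n m k : ℝ) / n.choose k| ≤ 1 := by
    rw [abs_div, Nat.abs_cast]
    exact div_le_one_of_le₀ (by exact_mod_cast abs_omegaW_le_choose k hm) (by positivity)
  have hy : |1 - 2 * (m : ℝ) / n| ≤ 1 := by
    have : (m : ℝ) / n ≤ 1 := div_le_one_of_le₀ (by exact_mod_cast hm) (by positivity)
    have : 0 ≤ (m : ℝ) / n := by positivity
    rw [abs_le, mul_div_assoc]
    constructor <;> linarith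
  calc _ ≤ |(omegaW n m k : ℝ) / n.choose k| + |1 - 2 * (m : ℝ) / n| ^ k := by
        rw [← abs_pow]; exact abs_sub _ _
    _ ≤ 1 + 1 := add_le_add hω (pow_le_one₀ (abs_nonneg _) hy)
    _ = 2 := one_add_one_eq_two

/-- There are positive constants `A_k`, `B_k` with
`|ω_{n,m,k}/C(n,k) − (1−2m/n)^k| ≤ (A_k/n)|1−2m/n|^{k−2} + B_k/n²`. -/
theorem abs_omegaW_div_choose_sub_le (k : ℕ) (hk : 3 ≤ k) :
    ∃ A B : ℝ, 0 < A ∧ 0 < B ∧ ∀ n m : ℕ, k ≤ n → m ≤ n →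
      |(omegaW n m k : ℝ) / (n.choose k : ℝ) - (1 - 2 * (m : ℝ) / n) ^ k| ≤
        A / n * |1 - 2 * (m : ℝ) / n| ^ (k - 2) + B / (n : ℝ) ^ 2 := by
  obtain ⟨k, rfl⟩ : ∃ j, k = j + 2 := ⟨k - 2, by omega⟩
  refine ⟨2 * (k + 2) ^ 2 + 2 ^ (k + 2) * (k + 2)!, k * 2 ^ (k + 2) * (k + 2)! + 8 * (k + 2) ^ 2,
    by positivity, by positivity, fun n m hkn hmn => ?_⟩
  rw [Nat.add_sub_cancel]
  rcases lt_or_ge n (2 * (k + 2)) with hsmall | hbig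
  · have hn0 : (0 : ℝ) < n := by exact_mod_cast (by omega : 0 < n)
    have hsmallR : (n : ℝ) < 2 * (k + 2) := by exact_mod_cast hsmall
    have hB : 2 ≤ (k * 2 ^ (k + 2) * (k + 2)! + 8 * (k + 2) ^ 2 : ℝ) / n ^ 2 := by
      rw [le_div_iff₀ (by positivity)]
      nlinarith [show (0 : ℝ) ≤ k * 2 ^ (k + 2) * (k + 2)! by positivity]
    have hA : 0 ≤ (2 * (k + 2) ^ 2 + 2 ^ (k + 2) * (k + 2)! : ℝ) / n *
        |1 - 2 * (m : ℝ) / n| ^ k := by positivity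
    linarith [abs_omegaW_div_choose_sub_pow_le_two (k + 2) hmn]
  · refine (abs_omegaW_div_choose_sub_pow_le k hbig hmn).trans ?_
    gcongr
    exact le_add_of_nonneg_right (by positivity)
end

section
/- Let c be a real number with 0 < c ≤ 1 and set L(n) = ⌊c·n⌋. Let P_(L(n)) denote the fraction of matrices A ∈ M_{L(n),n,3} with rank(A) = L(n) (maximal rank). Then limsup_{n→∞} P_(L(n)) ≤ 1 − (exp(−3c) + 3c·exp(−6c) − c·exp(−9c) − 1 + c)/c. -/
/-!
Over any nontrivial commutative ring the rank of a matrix is at most the number of its distinct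
nonzero columns. Zero columns, and repeated copies of a unit column `eᵢ`, therefore lower the
trivial bound `n`: writing `Z(A)` for the number of zero columns and `Dᵢ(A)` for the number of
columns equal to `eᵢ`,
`L · [rank A = L] ≤ rank A ≤ n - Z(A) - ∑ᵢ (Dᵢ(A) - 1)₊`.
A row of weight 3 forces `Dᵢ ≤ 3`, where `(Dᵢ - 1)₊ = C(Dᵢ, 2) - C(Dᵢ, 3)`, and the averages
of `Z`, `C(Dᵢ, 2)` and `C(Dᵢ, 3)` over `M_{L,n,3}` are explicit: count the matrices whose
columns on a fixed set of positions are prescribed. Averaging the inequality bounds `P_(L)` by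
an expression in the ratios `C(n - t, 3) / C(n, 3)`, whose `L`-th powers tend to `exp (-3 t c)`
when `L ~ c n`.
-/

open Finset Filter

attribute [local instance] Classical.propDecidable

/-- `M_{L,n,k}`: the set of `L × n` matrices over `ZMod 2` with exactly `k`
nonzero entries in each row. -/
noncomputable def Mset (L n k : ℕ) : Finset (Matrix (Fin L) (Fin n) (ZMod 2)) :=
  Finset.univ.filter fun A =>
    ∀ i : Fin L, (Finset.univ.filter fun j : Fin n => A i j ≠ 0).card = k

/-- `Y(A)`: the number of vectors in the kernel of the transpose of `A`. -/
noncomputable def Ycount {L n : ℕ} (A : Matrix (Fin L) (Fin n) (ZMod 2)) : ℕ :=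
  Nat.card {u : Fin L → ZMod 2 // Matrix.vecMul u A = 0}

/-- `E_{L,k}(Y)`: the expectation of `Y` over a uniformly random `A ∈ M_{L,n,k}`
(there are `C(n,k)^L` such matrices). -/
noncomputable def EY (n L k : ℕ) : ℝ :=
  (∑ A ∈ Mset L n k, (Ycount A : ℝ)) / (n.choose k : ℝ) ^ L

/-- `P_(r)`: the fraction of matrices in `M_{L,n,k}` of rank `r`. -/
noncomputable def Prank (n L k r : ℕ) : ℝ :=
  (((Mset L n k).filter fun A => A.rank = r).card : ℝ) / (n.choose k : ℝ) ^ L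

open Topology

noncomputable def fiberCard {ι β : Type*} [Fintype ι] (f : ι → β) (b : β) : ℕ := #{i | f i = b}

theorem ncard_range_diff_add_fiberCard_add_sum_le {ι β : Type*} [Fintype ι] (f : ι → β)
    (b : β) (T : Finset β) (hb : b ∉ T) :
    (Set.range f \ {b}).ncard + fiberCard f b + ∑ v ∈ T, (fiberCard f v - 1)
      ≤ Fintype.card ι := by
  set U := univ.image f
  have range_diff : Set.range f \ {b} = ↑(U.erase b) := by
    rw [coe_erase, coe_image, coe_univ, Set.image_univ]
  rw [range_diff, Set.ncard_coe_finset]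
  have fiberCard_pos_iff : ∀ v, 0 < fiberCard f v ↔ v ∈ U := fun v => by
    simp [fiberCard, card_pos, filter_nonempty_iff, U]
  have total : ∑ v ∈ U, fiberCard f v = Fintype.card ι :=
    (card_eq_sum_card_image f univ).symm.trans card_univ
  have sum_fibers : ∑ v ∈ U, fiberCard f v = #U + ∑ v ∈ U, (fiberCard f v - 1) := by
    rw [card_eq_sum_ones, ← sum_add_distrib]
    exact sum_congr rfl fun v hv => by have := (fiberCard_pos_iff v).mpr hv; omega
  have card_erase_add : #(U.erase b) + fiberCard f b ≤ #U + (fiberCard f b - 1) := by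
    by_cases hbU : b ∈ U
    · have := (fiberCard_pos_iff b).mpr hbU
      have := card_erase_of_mem hbU
      have := card_pos.mpr ⟨b, hbU⟩
      omega
    · have := (fiberCard_pos_iff b).not.mpr hbU
      rw [erase_eq_of_notMem hbU]
      omega
  have excess_le : ∑ v ∈ insert b T, (fiberCard f v - 1) ≤ ∑ v ∈ U, (fiberCard f v - 1) :=
    sum_le_sum_of_ne_zero fun v _ hv => (fiberCard_pos_iff v).mp (by omega)
  rw [sum_insert hb] at excess_le
  omega

section Rank

variable {R : Type*} [CommRing R] {m n : Type*} [Fintype m] [Fintype n]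

theorem Matrix.rank_le_ncard_range_col_diff_zero [Nontrivial R] (A : Matrix m n R) :
    A.rank ≤ (Set.range A.col \ {0}).ncard := by
  rw [A.rank_eq_finrank_span_cols, ← Submodule.span_sdiff_singleton_zero,
    Set.ncard_eq_toFinset_card']
  exact finrank_span_le_card _

theorem Matrix.rank_add_fiberCard_col_zero_add_sum_le [Nontrivial R] (A : Matrix m n R)
    (T : Finset (m → R)) (hT : 0 ∉ T) :
    A.rank + fiberCard A.col 0 + ∑ v ∈ T, (fiberCard A.col v - 1) ≤ Fintype.card n :=
  calc _ ≤ _ := by gcongr; exact A.rank_le_ncard_range_col_diff_zero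
    _ ≤ _ := ncard_range_diff_add_fiberCard_add_sum_le A.col 0 T hT

theorem Matrix.rank_add_fiberCard_col_zero_add_sum_single_le [Nontrivial R] [DecidableEq m]
    (A : Matrix m n R) :
    A.rank + fiberCard A.col 0 + ∑ i, (fiberCard A.col (Pi.single i 1) - 1)
      ≤ Fintype.card n := by
  have single_inj : Function.Injective fun i : m => (Pi.single i 1 : m → R) :=
    fun i j hij => by simpa [Pi.single_apply, eq_comm] using congrFun hij j
  have h := A.rank_add_fiberCard_col_zero_add_sum_le (univ.image fun i => Pi.single i 1) (by simp)
  rwa [sum_image fun i _ j _ hij => single_inj hij] at h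

end Rank

theorem ZMod.ne_zero_iff_eq_one_of_two (x : ZMod 2) : x ≠ 0 ↔ x = 1 :=
  ⟨Fin.eq_one_of_ne_zero x, fun h => h ▸ one_ne_zero⟩

section WeightCount

variable {ι : Type*} [Fintype ι]

noncomputable def ZMod.twoFunEquivFinset : (ι → ZMod 2) ≃ Finset ι where
  toFun v := {j | v j ≠ 0}
  invFun s j := if j ∈ s then 1 else 0
  left_inv v := funext fun j => by
    by_cases hj : v j = 0 <;> simp [hj, (ZMod.ne_zero_iff_eq_one_of_two _).mp]
  right_inv s := by ext j; by_cases hj : j ∈ s <;> simp [hj]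

theorem card_weight_eq_and_forall_eq_zero (k : ℕ) (s : Finset ι) :
    #{v : ι → ZMod 2 | #{j | v j ≠ 0} = k ∧ ∀ j ∈ s, v j = 0}
      = (Fintype.card ι - #s).choose k := by
  rw [← card_compl, ← card_powersetCard]
  refine card_equiv ZMod.twoFunEquivFinset fun v => ?_
  simp [ZMod.twoFunEquivFinset, subset_iff, and_comm, not_imp_not]

theorem card_weight_eq_and_forall_eq_one {k : ℕ} (s : Finset ι) (hs : #s ≤ k) :
    #{v : ι → ZMod 2 | #{j | v j ≠ 0} = k ∧ ∀ j ∈ s, v j = 1}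
      = (Fintype.card ι - #s).choose (k - #s) := by
  rw [← card_univ, ← card_filter_powersetCard_subset s univ k (subset_univ s) hs]
  refine card_equiv ZMod.twoFunEquivFinset fun v => ?_
  simp [ZMod.twoFunEquivFinset, subset_iff, ZMod.ne_zero_iff_eq_one_of_two]

end WeightCount

theorem sum_choose_fiberCard {α ι β : Type*} [Fintype ι] (M : Finset α) (F : α → ι → β)
    (b : β) (r : ℕ) :
    ∑ a ∈ M, (fiberCard (F a) b).choose r
      = ∑ s ∈ powersetCard r univ, #{a ∈ M | ∀ j ∈ s, F a j = b} := by
  have choose_eq : ∀ a, (fiberCard (F a) b).choose r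
      = #{s ∈ powersetCard r univ | ∀ j ∈ s, F a j = b} := fun a => by
    rw [fiberCard, ← card_powersetCard]
    congr 1
    ext s
    simp [mem_powersetCard, subset_iff, and_comm]
  simp_rw [choose_eq]
  exact sum_card_bipartiteAbove_eq_sum_card_bipartiteBelow _

section MsetCount

variable {L n k : ℕ}

theorem card_filter_Mset_col_eq_on {s : Finset (Fin n)} (hs : #s ≤ k) (v : Fin L → ZMod 2) :
    #{A ∈ Mset L n k | ∀ j ∈ s, A.col j = v}
      = ∏ i, if v i = 0 then (n - #s).choose k else (n - #s).choose (k - #s) := by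
  calc _ = #(Fintype.piFinset fun i =>
        {w : Fin n → ZMod 2 | #{j | w j ≠ 0} = k ∧ ∀ j ∈ s, w j = v i}) :=
        card_equiv Matrix.of.symm fun A => by
          simp [Mset, Fintype.mem_piFinset, funext_iff, forall_and, forall_comm (α := Fin L)]
          exact fun _ => forall_congr' fun i => by congr!
    _ = _ := by
      rw [Fintype.card_piFinset]
      refine prod_congr rfl fun i _ => ?_
      by_cases hv : v i = 0
      · rw [if_pos hv, hv]
        convert card_weight_eq_and_forall_eq_zero k s; simp
      · rw [if_neg hv, (ZMod.ne_zero_iff_eq_one_of_two _).mp hv]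
        convert card_weight_eq_and_forall_eq_one s hs; simp

theorem sum_Mset_choose_fiberCard_col {r : ℕ} (hr : r ≤ k) (v : Fin L → ZMod 2) :
    ∑ A ∈ Mset L n k, (fiberCard A.col v).choose r
      = n.choose r * ∏ i, if v i = 0 then (n - r).choose k else (n - r).choose (k - r) := by
  rw [sum_choose_fiberCard]
  calc _ = ∑ s ∈ powersetCard r (univ : Finset (Fin n)),
        ∏ i, if v i = 0 then (n - r).choose k else (n - r).choose (k - r) :=
        sum_congr rfl fun s hs => by
          obtain ⟨-, rfl⟩ := mem_powersetCard.mp hs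
          convert card_filter_Mset_col_eq_on hr v
    _ = _ := by rw [sum_const, card_powersetCard, card_univ, Fintype.card_fin, smul_eq_mul]

theorem card_Mset : #(Mset L n k) = n.choose k ^ L := by
  simpa using sum_Mset_choose_fiberCard_col (L := L) (n := n) (Nat.zero_le k) 0

theorem sum_Mset_fiberCard_col_zero (hk : 1 ≤ k) :
    ∑ A ∈ Mset L n k, fiberCard A.col 0 = n * (n - 1).choose k ^ L := by
  simpa using sum_Mset_choose_fiberCard_col (L := L) (n := n) hk 0

theorem sum_Mset_choose_fiberCard_col_single {r : ℕ} (hr : r ≤ k) (i : Fin L) :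
    ∑ A ∈ Mset L n k, (fiberCard A.col (Pi.single i 1)).choose r
      = n.choose r * ((n - r).choose (k - r) * (n - r).choose k ^ (L - 1)) := by
  rw [sum_Mset_choose_fiberCard_col hr, Fintype.prod_eq_mul_prod_compl i]
  congr 2
  · simp
  · rw [prod_congr rfl fun j hj => by rw [Pi.single_eq_of_ne (by simpa using hj), if_pos rfl],
      prod_const, card_compl, card_singleton, Fintype.card_fin]

theorem fiberCard_col_single_le_of_mem_Mset {A : Matrix (Fin L) (Fin n) (ZMod 2)}
    (hA : A ∈ Mset L n k) (i : Fin L) : fiberCard A.col (Pi.single i 1) ≤ k :=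
  calc _ ≤ #{j | A i j ≠ 0} := card_le_card fun j hj => by
        simp only [mem_filter, mem_univ, true_and] at hj ⊢
        simp [← Matrix.col_apply, hj]
    _ = k := (mem_filter.mp hA).2 i

end MsetCount

theorem Nat.cast_sub_one_eq_choose_two_sub_choose_three {d : ℕ} (hd : d ≤ 3) :
    ((d - 1 : ℕ) : ℝ) = d.choose 2 - d.choose 3 := by
  interval_cases d <;> norm_num [Nat.choose]

theorem fiberCard_zero_add_sum_choose_add_ite_rank_le {L n : ℕ}
    {A : Matrix (Fin L) (Fin n) (ZMod 2)} (hA : A ∈ Mset L n 3) :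
    (fiberCard A.col 0 : ℝ) + ∑ i, (((fiberCard A.col (Pi.single i 1)).choose 2 : ℝ)
        - (fiberCard A.col (Pi.single i 1)).choose 3) + (if A.rank = L then (L : ℝ) else 0)
      ≤ n := by
  have rank_bound := A.rank_add_fiberCard_col_zero_add_sum_single_le
  rw [Fintype.card_fin] at rank_bound
  have full_rank : (if A.rank = L then L else 0) ≤ A.rank := by split_ifs <;> omega
  rw [← sum_congr rfl fun i _ => Nat.cast_sub_one_eq_choose_two_sub_choose_three
    (fiberCard_col_single_le_of_mem_Mset hA i)]
  exact_mod_cast (by omega :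
    fiberCard A.col 0 + ∑ i, (fiberCard A.col (Pi.single i 1) - 1)
      + (if A.rank = L then L else 0) ≤ n)

theorem sum_Mset_sum_choose_two_sub_choose_three {L n : ℕ} :
    ∑ A ∈ Mset L n 3, ∑ i, (((fiberCard A.col (Pi.single i 1)).choose 2 : ℝ)
        - (fiberCard A.col (Pi.single i 1)).choose 3)
      = L * (3 * n.choose 3 * (n - 2).choose 3 ^ (L - 1)
        - n.choose 3 * (n - 3).choose 3 ^ (L - 1)) := by
  have choose_mul_two : n.choose 2 * (n - 2).choose 1 = 3 * n.choose 3 := by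
    rw [mul_comm 3, ← Nat.choose_mul (by norm_num : 2 ≤ 3)]; rfl
  rw [sum_comm, sum_congr rfl fun i _ => by
    rw [sum_sub_distrib, ← Nat.cast_sum, ← Nat.cast_sum,
      sum_Mset_choose_fiberCard_col_single (by norm_num),
      sum_Mset_choose_fiberCard_col_single le_rfl, ← mul_assoc, choose_mul_two]]
  simp [mul_sub]

noncomputable def avoidProb (n t : ℕ) : ℝ := ((n - t).choose 3 : ℝ) / n.choose 3

theorem Prank_le {L n : ℕ} (hL : 0 < L) (hn : 3 ≤ n) :
    Prank n L 3 L ≤ n / L * (1 - avoidProb n 1 ^ L) - 3 * avoidProb n 2 ^ (L - 1)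
      + avoidProb n 3 ^ (L - 1) := by
  have summed := sum_le_sum fun A (hA : A ∈ Mset L n 3) =>
    fiberCard_zero_add_sum_choose_add_ite_rank_le hA
  rw [sum_add_distrib, sum_add_distrib, sum_Mset_sum_choose_two_sub_choose_three, ← sum_filter,
    sum_const, sum_const, card_Mset, nsmul_eq_mul, nsmul_eq_mul] at summed
  have sum_zero_cols :
      ∑ A ∈ Mset L n 3, (fiberCard A.col 0 : ℝ) = n * (n - 1).choose 3 ^ L := by
    exact_mod_cast sum_Mset_fiberCard_col_zero (by norm_num)
  rw [sum_zero_cols] at summed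
  have choose_ne : (n.choose 3 : ℝ) ≠ 0 := by exact_mod_cast (Nat.choose_pos hn).ne'
  obtain ⟨M, rfl⟩ : ∃ M, L = M + 1 := ⟨L - 1, by omega⟩
  rw [Nat.add_sub_cancel] at summed ⊢
  have gap : n / (M + 1 : ℕ) * (1 - avoidProb n 1 ^ (M + 1)) - 3 * avoidProb n 2 ^ M
      + avoidProb n 3 ^ M - Prank n (M + 1) 3 (M + 1)
      = ((n.choose 3 ^ (M + 1) : ℕ) * n - (n * (n - 1).choose 3 ^ (M + 1)
        + (M + 1 : ℕ)
          * (3 * n.choose 3 * (n - 2).choose 3 ^ M - n.choose 3 * (n - 3).choose 3 ^ M)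
        + #{A ∈ Mset (M + 1) n 3 | A.rank = M + 1} * (M + 1 : ℕ)))
        / ((M + 1 : ℕ) * (n.choose 3 : ℝ) ^ (M + 1)) := by
    unfold Prank avoidProb
    rw [div_pow, div_pow, div_pow]
    push_cast
    field_simp
    ring
  rw [← sub_nonneg, gap]
  exact div_nonneg (sub_nonneg.mpr summed) (by positivity)

section Asymptotics

open Real

theorem avoidProb_eq_prod {n t : ℕ} (h : t + 3 ≤ n) :
    avoidProb n t = ∏ j ∈ range 3, (1 - t / (n - j : ℝ)) := by
  have choose_three (m : ℕ) : (m.choose 3 : ℝ) = m * (m - 1) * (m - 2) / 6 := by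
    rw [Nat.cast_choose_eq_descPochhammer_div]
    simp [descPochhammer_succ_right, Nat.factorial]
  have hn : (t + 3 : ℝ) ≤ n := by exact_mod_cast h
  have h0 : (n : ℝ) ≠ 0 := by linarith
  have h1 : (n : ℝ) - 1 ≠ 0 := by linarith
  have h2 : (n : ℝ) - 2 ≠ 0 := by linarith
  rw [avoidProb, choose_three, choose_three, Nat.cast_sub (by omega)]
  simp only [prod_range_succ, prod_range_zero, Nat.cast_zero, Nat.cast_one, Nat.cast_ofNat,
    sub_zero, one_mul]
  field_simp
  ring

theorem tendsto_nat_mul_log_one_sub_div_sub (t j : ℝ) :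
    Tendsto (fun n : ℕ => n * log (1 - t / (n - j))) atTop (𝓝 (-t)) := by
  refine tendsto_nat_mul_log_one_add_of_tendsto (g := fun n => -t / (n - j)) ?_ |>.congr
    fun n => by rw [neg_div, ← sub_eq_add_neg]
  have := (tendsto_natCast_div_add_atTop (-j : ℝ)).const_mul (-t)
  rw [mul_one] at this
  refine this.congr fun n => ?_
  rw [sub_eq_add_neg (n : ℝ) j]
  ring

theorem tendsto_nat_mul_log_avoidProb (t : ℕ) :
    Tendsto (fun n : ℕ => n * log (avoidProb n t)) atTop (𝓝 (-3 * t)) := by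
  have sum := tendsto_finsetSum (range 3) fun j _ => tendsto_nat_mul_log_one_sub_div_sub t j
  simp only [sum_const, card_range, nsmul_eq_mul] at sum
  refine (sum.congr' ?_).trans (by norm_num)
  filter_upwards [eventually_ge_atTop (t + 3)] with n hn
  rw [avoidProb_eq_prod hn, log_prod, mul_sum]
  intro j hj
  have : (t + 3 : ℝ) ≤ n := by exact_mod_cast hn
  have : (j : ℝ) < 3 := by exact_mod_cast mem_range.mp hj
  exact (sub_pos.mpr ((div_lt_one (by linarith)).mpr (by linarith))).ne'

theorem tendsto_pow_of_tendsto_nat_mul_log {a : ℕ → ℝ} {e : ℕ → ℕ} {s c : ℝ}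
    (ha : ∀ᶠ n in atTop, 0 < a n) (hlog : Tendsto (fun n : ℕ => n * log (a n)) atTop (𝓝 s))
    (he : Tendsto (fun n : ℕ => (e n : ℝ) / n) atTop (𝓝 c)) :
    Tendsto (fun n => a n ^ e n) atTop (𝓝 (exp (c * s))) := by
  refine ((continuous_exp.tendsto _).comp (he.mul hlog)).congr' ?_
  filter_upwards [ha, eventually_gt_atTop 0] with n han hn
  have : (n : ℝ) ≠ 0 := by exact_mod_cast hn.ne'
  rw [Function.comp_apply, show (e n : ℝ) / n * (n * log (a n)) = e n * log (a n) by field_simp,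
    exp_nat_mul, exp_log han]

theorem tendsto_avoidProb_pow {e : ℕ → ℕ} {c : ℝ}
    (he : Tendsto (fun n : ℕ => (e n : ℝ) / n) atTop (𝓝 c)) (t : ℕ) :
    Tendsto (fun n => avoidProb n t ^ e n) atTop (𝓝 (exp (-3 * t * c))) := by
  have pos : ∀ᶠ n in atTop, 0 < avoidProb n t := by
    filter_upwards [eventually_ge_atTop (t + 3)] with n hn
    unfold avoidProb
    have := Nat.choose_pos (show 3 ≤ n - t by omega)
    have := Nat.choose_pos (show 3 ≤ n by omega)
    positivity
  simpa [mul_comm] using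
    tendsto_pow_of_tendsto_nat_mul_log pos (tendsto_nat_mul_log_avoidProb t) he

theorem tendsto_natCast_sub_const_div {e : ℕ → ℕ} {c : ℝ}
    (he : Tendsto (fun n : ℕ => (e n : ℝ) / n) atTop (𝓝 c)) (k : ℕ) :
    Tendsto (fun n : ℕ => ((e n - k : ℕ) : ℝ) / n) atTop (𝓝 c) := by
  have lower : Tendsto (fun n : ℕ => ((e n : ℝ) - k) / n) atTop (𝓝 c) := by
    simpa [sub_div] using he.sub (tendsto_const_div_atTop_nhds_zero_nat (k : ℝ))
  refine tendsto_of_tendsto_of_tendsto_of_le_of_le lower he (fun n => ?_) (fun n => ?_)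
  · exact div_le_div_of_nonneg_right (sub_le_iff_le_add.mpr
      (by rw [← Nat.cast_add]; exact Nat.cast_le.mpr le_tsub_add)) n.cast_nonneg
  · exact div_le_div_of_nonneg_right (Nat.cast_le.mpr (Nat.sub_le _ _)) n.cast_nonneg

end Asymptotics

theorem limsup_Prank_le_general (c : ℝ) (hc0 : 0 < c) :
    limsup (fun n : ℕ => Prank n ⌊c * n⌋₊ 3 ⌊c * n⌋₊) atTop ≤
      1 - (Real.exp (-3 * c) + 3 * c * Real.exp (-6 * c) - c * Real.exp (-9 * c)
        - 1 + c) / c := by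
  set L : ℕ → ℕ := fun n => ⌊c * n⌋₊
  have hL : Tendsto (fun n : ℕ => (L n : ℝ) / n) atTop (𝓝 c) :=
    (tendsto_nat_floor_mul_div_atTop hc0.le).comp tendsto_natCast_atTop_atTop
  have hnL : Tendsto (fun n : ℕ => (n : ℝ) / L n) atTop (𝓝 c⁻¹) := by
    simpa using hL.inv₀ hc0.ne'
  have bound : ∀ᶠ n in atTop, Prank n (L n) 3 (L n) ≤ n / L n * (1 - avoidProb n 1 ^ L n)
      - 3 * avoidProb n 2 ^ (L n - 1) + avoidProb n 3 ^ (L n - 1) := by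
    filter_upwards [(tendsto_nat_floor_mul_atTop c hc0).eventually_gt_atTop 0,
      eventually_ge_atTop 3] with n hLn hn using Prank_le hLn hn
  have limit : Tendsto (fun n : ℕ => n / L n * (1 - avoidProb n 1 ^ L n)
      - 3 * avoidProb n 2 ^ (L n - 1) + avoidProb n 3 ^ (L n - 1)) atTop
      (𝓝 (c⁻¹ * (1 - Real.exp (-3 * c)) - 3 * Real.exp (-6 * c) + Real.exp (-9 * c))) := by
    convert ((hnL.mul (tendsto_const_nhds.sub (tendsto_avoidProb_pow hL 1))).sub
      ((tendsto_avoidProb_pow (tendsto_natCast_sub_const_div hL 1) 2).const_mul 3)).add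
      (tendsto_avoidProb_pow (tendsto_natCast_sub_const_div hL 1) 3) using 4 <;> norm_num
  have Prank_nonneg : ∀ n, 0 ≤ Prank n (L n) 3 (L n) := fun n => by unfold Prank; positivity
  calc _ ≤ _ := limsup_le_limsup bound
        (isBoundedUnder_of ⟨0, Prank_nonneg⟩).isCoboundedUnder_le limit.isBoundedUnder_le
    _ = _ := limit.limsup_eq
    _ = _ := by
      field_simp
      ring

/-- For `0 < c ≤ 1` and `L(n) = ⌊c·n⌋`, the probability that a matrix in
`M_{L(n),n,3}` has maximal rank satisfies
`limsup P_(L(n)) ≤ 1 − (e^{−3c} + 3c e^{−6c} − c e^{−9c} − 1 + c)/c`. -/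
theorem limsup_Prank_le (c : ℝ) (hc0 : 0 < c) (hc1 : c ≤ 1) :
    limsup (fun n : ℕ => Prank n ⌊c * n⌋₊ 3 ⌊c * n⌋₊) atTop ≤
      1 - (Real.exp (-3 * c) + 3 * c * Real.exp (-6 * c) - c * Real.exp (-9 * c)
        - 1 + c) / c :=
  limsup_Prank_le_general c hc0
end
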